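/- Let α ∈ ℝ[t] be nonzero, let A ∈ ℍ[t] be nonzero and reduced with respect to i, and write A i Ā = F₁·i + F₂·j + F₃·k with F₁, F₂, F₃ ∈ ℝ[t]. Let z ∈ ℂ be a root of α (viewed in ℂ[t]) of multiplicity n ≥ 3. Then there always exist μ ∈ ℂ[t] and b₁, b₂, b₃ ∈ ℂ[t], not all divisible by (X − z)ⁿ, such that α·b_m′ − α′·b_m = μ·F_m for m = 1, 2, 3 (all polynomials viewed in ℂ[t]). -/

import Mathlib

/-!
Write `D = X - z` and `α = Dⁿ β` with `β(z) ≠ 0`. For `b = β g` one computes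
`α b' - α' b = β² Dⁿ⁻¹ (D g' - n g)`, so it suffices to solve `D g_m' - n g_m = h F_m` for a
common polynomial `h`. In the basis of powers of `D` the operator `g ↦ D g' - n g` scales `Dˢ`
by `s - n`, so this is solvable exactly when the `Dⁿ`-coefficient of `h F_m` vanishes: three
linear conditions, which a nonzero `h` of degree at most `3 < n + 1` satisfies. Then
`Dⁿ ∣ g_m` would force `Dⁿ⁺¹ ∣ h F_m`, impossible once `F_m(z) ≠ 0`.

That some `F_m(z) ≠ 0` is where reducedness enters. Otherwise the real minimal polynomial `q` of
`z` (of degree 1 or 2) divides `A i Ā`. Writing `A = q S + R` with `deg R < deg q`, also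
`q ∣ R i R̄`; comparing degrees gives `deg q = 2` and `R = r P` with `P = X + p` monic linear.
Then `P i P̄ = q i`, whose linear coefficient `p i + i p̄` being a multiple of `i` forces `p` to
commute with `i`; hence `P̄ P = q` and `A = (S P̄ + r) P`, a right factor of `A` excluded by
reducedness.
-/
open Polynomial

noncomputable section

/-- The quaternion unit `i`. -/
def qi : Quaternion ℝ := ⟨0, 1, 0, 0⟩
/-- The quaternion unit `j`. -/
def qj : Quaternion ℝ := ⟨0, 0, 1, 0⟩
/-- The quaternion unit `k`. -/
def qk : Quaternion ℝ := ⟨0, 0, 0, 1⟩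

/-- Embedding of real polynomials into quaternion polynomials (scalar coefficients). -/
def toQ : Polynomial ℝ →+* Polynomial (Quaternion ℝ) :=
  mapRingHom (algebraMap ℝ (Quaternion ℝ))

/-- Embedding of real polynomials into complex polynomials. -/
def toC : Polynomial ℝ →+* Polynomial ℂ :=
  mapRingHom (algebraMap ℝ ℂ)

/-- Coefficientwise quaternion conjugation of a quaternion polynomial. -/
def pconj (p : Polynomial (Quaternion ℝ)) : Polynomial (Quaternion ℝ) :=
  p.sum fun n a => monomial n (star a)

/-- `A ∈ ℍ[t]` is *reduced with respect to `i`* if it has no real polynomial factor of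
positive degree and no right factor of positive degree all of whose coefficients lie in the
subalgebra of `ℍ` generated by `1` and `i`. -/
def ReducedWrtI (A : Polynomial (Quaternion ℝ)) : Prop :=
  (∀ ψ : Polynomial ℝ, ∀ A' : Polynomial (Quaternion ℝ), A = toQ ψ * A' → ψ.natDegree = 0) ∧
  (∀ A' R : Polynomial (Quaternion ℝ), A = A' * R →
    (∀ n, (R.coeff n).imJ = 0 ∧ (R.coeff n).imK = 0) → R.natDegree = 0)

open scoped Quaternion

@[simp] lemma re_qi : qi.re = 0 := rfl
@[simp] lemma imI_qi : qi.imI = 1 := rfl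
@[simp] lemma imJ_qi : qi.imJ = 0 := rfl
@[simp] lemma imK_qi : qi.imK = 0 := rfl

lemma qi_ne_zero : qi ≠ 0 := fun h => by simpa using congrArg QuaternionAlgebra.imI h

lemma mul_qi_comm_of_imJ_imK {p : ℍ} (hJ : p.imJ = 0) (hK : p.imK = 0) : p * qi = qi * p := by
  ext <;> simp [hJ, hK]

lemma imJ_imK_eq_zero_of_mul_qi_add_qi_mul_star {p : ℍ} {t : ℝ}
    (h : p * qi + qi * star p = (t : ℍ) * qi) : p.imJ = 0 ∧ p.imK = 0 :=
  ⟨by simpa using congrArg QuaternionAlgebra.imK h, by simpa using congrArg QuaternionAlgebra.imJ h⟩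

lemma coeff_pconj (p : Polynomial ℍ) (k : ℕ) : (pconj p).coeff k = star (p.coeff k) := by
  rw [pconj, Polynomial.sum_def, finsetSum_coeff]
  simp only [coeff_monomial]
  rw [Finset.sum_ite_eq']
  split_ifs with h
  · rfl
  · simp [notMem_support_iff.mp h]

lemma pconj_add (p q : Polynomial ℍ) : pconj (p + q) = pconj p + pconj q :=
  Polynomial.ext fun k => by simp [coeff_pconj]

lemma pconj_mul (p q : Polynomial ℍ) : pconj (p * q) = pconj q * pconj p := by
  refine Polynomial.ext fun k => ?_
  rw [coeff_pconj, coeff_mul, coeff_mul, star_sum,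
    ← Finset.Nat.sum_antidiagonal_swap (f := fun a => (pconj q).coeff a.1 * (pconj p).coeff a.2)]
  refine Finset.sum_congr rfl fun a _ => ?_
  simp [coeff_pconj]

lemma pconj_C (a : ℍ) : pconj (C a) = C (star a) :=
  Polynomial.ext fun k => by simp [coeff_pconj, coeff_C, apply_ite star]

lemma pconj_X : pconj X = X :=
  Polynomial.ext fun k => by simp [coeff_pconj, coeff_X, apply_ite star]

lemma coeff_toQ (ψ : ℝ[X]) (k : ℕ) : (toQ ψ).coeff k = (ψ.coeff k : ℍ) := by
  simp [toQ, coeff_map]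

lemma pconj_toQ (ψ : ℝ[X]) : pconj (toQ ψ) = toQ ψ :=
  Polynomial.ext fun k => by simp [coeff_pconj, coeff_toQ]

lemma pconj_ne_zero {p : Polynomial ℍ} (hp : p ≠ 0) : pconj p ≠ 0 := by
  contrapose! hp
  exact Polynomial.ext fun k => by simpa [coeff_pconj] using congrArg (coeff · k) hp

lemma natDegree_pconj (p : Polynomial ℍ) : (pconj p).natDegree = p.natDegree := by
  have hsupp : (pconj p).support = p.support := by
    ext k; simp [mem_support_iff, coeff_pconj]
  simp only [natDegree, degree, hsupp]

lemma toQ_mul_comm (ψ : ℝ[X]) (p : Polynomial ℍ) : toQ ψ * p = p * toQ ψ := by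
  refine Polynomial.ext fun k => ?_
  rw [coeff_mul, coeff_mul,
    ← Finset.Nat.sum_antidiagonal_swap (f := fun a => p.coeff a.1 * (toQ ψ).coeff a.2)]
  refine Finset.sum_congr rfl fun a _ => ?_
  simp only [Prod.fst_swap, Prod.snd_swap, coeff_toQ]
  exact Quaternion.coe_commutes _ _

lemma natDegree_toQ (ψ : ℝ[X]) : (toQ ψ).natDegree = ψ.natDegree :=
  natDegree_map_eq_of_injective (algebraMap ℝ ℍ).injective ψ

lemma Polynomial.Monic.toQ {q : ℝ[X]} (hq : q.Monic) : (toQ q).Monic := hq.map _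

lemma toQ_dvd_sandwich_of_eq_add {q : ℝ[X]} {A S R B : Polynomial ℍ} (hA : A = toQ q * S + R)
    (h : toQ q ∣ A * B * pconj A) : toQ q ∣ R * B * pconj R := by
  have hA' : pconj A = pconj S * toQ q + pconj R := by
    rw [hA, pconj_add, pconj_mul, pconj_toQ]
  have hR : R * B * pconj R
      = A * B * pconj A - toQ q * (S * B * pconj A) - R * B * pconj S * toQ q := by
    rw [hA', hA]; noncomm_ring
  rw [hR, ← toQ_mul_comm]
  exact dvd_sub (dvd_sub h (dvd_mul_right _ _)) (dvd_mul_right _ _)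

lemma toQ_dvd_C_mul_mul_C {q : ℝ[X]} {M : Polynomial ℍ} (h : toQ q ∣ M) (a b : ℍ) :
    toQ q ∣ C a * M * C b := by
  obtain ⟨W, rfl⟩ := h
  exact ⟨C a * W * C b, by rw [← mul_assoc, ← toQ_mul_comm, mul_assoc, mul_assoc, mul_assoc]⟩

lemma two_mul_natDegree_eq_of_sandwich_qi_eq {q : ℝ[X]} (hq : q.Monic) {R W : Polynomial ℍ}
    (hR : R ≠ 0) (hW : R * C qi * pconj R = toQ q * W) :
    2 * R.natDegree = q.natDegree + W.natDegree := by
  have hC : (C qi : Polynomial ℍ) ≠ 0 := C_ne_zero.mpr qi_ne_zero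
  have hW0 : W ≠ 0 := by
    rintro rfl
    rw [mul_zero] at hW
    exact mul_ne_zero (mul_ne_zero hR hC) (pconj_ne_zero hR) hW
  have := congrArg natDegree hW
  rw [natDegree_mul (mul_ne_zero hR hC) (pconj_ne_zero hR), natDegree_mul hR hC, natDegree_C,
    natDegree_pconj, natDegree_mul hq.toQ.ne_zero hW0, natDegree_toQ] at this
  omega

lemma sandwich_qi_X_add_C (p : ℍ) : (X + C p) * C qi * pconj (X + C p)
    = C qi * X ^ 2 + C (p * qi + qi * star p) * X + C (p * qi * star p) := by
  rw [pconj_add, pconj_X, pconj_C]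
  simp only [add_mul, mul_add, mul_assoc, X_mul_C, ← C_mul, sq]
  rw [C_add, add_mul, ← mul_assoc (C qi) (C (star p)) X, ← C_mul]
  abel

lemma sandwich_qi_eq_toQ_mul_C_qi {q : ℝ[X]} (hq : q.Monic) (hq2 : q.natDegree = 2) (p : ℍ)
    (h : toQ q ∣ (X + C p) * C qi * pconj (X + C p)) :
    (X + C p) * C qi * pconj (X + C p) = toQ q * C qi := by
  obtain ⟨W, hW⟩ := h
  have hWdeg : W.natDegree = 0 := by
    have := two_mul_natDegree_eq_of_sandwich_qi_eq hq (X_add_C_ne_zero p) hW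
    rw [natDegree_X_add_C, hq2] at this
    omega
  rw [eq_C_of_natDegree_eq_zero hWdeg] at hW
  have hw : W.coeff 0 = qi := by
    simpa [hq.toQ.leadingCoeff, pconj_add, pconj_X, pconj_C] using (congrArg leadingCoeff hW).symm
  rw [hW, hw]

lemma imJ_imK_eq_zero_of_sandwich_qi_eq {q : ℝ[X]} {p : ℍ}
    (h : (X + C p) * C qi * pconj (X + C p) = toQ q * C qi) : p.imJ = 0 ∧ p.imK = 0 := by
  have h1 : p * qi + qi * star p = (q.coeff 1 : ℍ) * qi := by
    simpa [sandwich_qi_X_add_C, coeff_C, coeff_X, coeff_toQ] using congrArg (coeff · 1) h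
  exact imJ_imK_eq_zero_of_mul_qi_add_qi_mul_star h1

lemma pconj_mul_self_eq_toQ_of_sandwich_qi_eq {q : ℝ[X]} {p : ℍ}
    (h : (X + C p) * C qi * pconj (X + C p) = toQ q * C qi) :
    pconj (X + C p) * (X + C p) = toQ q := by
  obtain ⟨hJ, hK⟩ := imJ_imK_eq_zero_of_sandwich_qi_eq h
  have hcomm : (X + C p) * C qi = C qi * (X + C p) := by
    rw [add_mul, mul_add, X_mul_C, ← C_mul, ← C_mul, mul_qi_comm_of_imJ_imK hJ hK]
  have hP : (X + C p : Polynomial ℍ) ≠ 0 := X_add_C_ne_zero p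
  have hnorm : (X + C p) * pconj (X + C p) = toQ q := by
    refine mul_left_cancel₀ (C_ne_zero.mpr qi_ne_zero) ?_
    rw [← mul_assoc, ← hcomm, h, toQ_mul_comm]
  refine mul_right_cancel₀ (pconj_ne_zero hP) ?_
  rw [mul_assoc, hnorm, toQ_mul_comm]

lemma natDegree_eq_one_of_toQ_dvd_sandwich_qi {q : ℝ[X]} (hq : q.Monic) (hq2 : q.natDegree ≤ 2)
    {R : Polynomial ℍ} (hR0 : R ≠ 0) (hRq : R.natDegree < q.natDegree)
    (h : toQ q ∣ R * C qi * pconj R) : R.natDegree = 1 ∧ q.natDegree = 2 := by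
  obtain ⟨W, hW⟩ := h
  have := two_mul_natDegree_eq_of_sandwich_qi_eq hq hR0 hW
  omega

lemma exists_eq_C_mul_X_add_C_of_natDegree_eq_one {K : Type*} [DivisionRing K] {R : K[X]}
    (hR : R.natDegree = 1) : ∃ r p : K, r ≠ 0 ∧ R = C r * (X + C p) := by
  have hR0 : R ≠ 0 := by rintro rfl; simp at hR
  have hr : R.coeff 1 ≠ 0 := by simpa [leadingCoeff, hR] using leadingCoeff_ne_zero.mpr hR0
  refine ⟨R.coeff 1, (R.coeff 1)⁻¹ * R.coeff 0, hr, ?_⟩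
  conv_lhs => rw [eq_X_add_C_of_natDegree_le_one hR.le]
  rw [mul_add, ← C_mul, ← mul_assoc, mul_inv_cancel₀ hr, one_mul]

lemma toQ_dvd_sandwich_qi_of_C_mul {q : ℝ[X]} {r : ℍ} (hr : r ≠ 0) {P : Polynomial ℍ}
    (h : toQ q ∣ C r * P * C qi * pconj (C r * P)) : toQ q ∣ P * C qi * pconj P := by
  convert toQ_dvd_C_mul_mul_C h r⁻¹ (star r)⁻¹ using 1
  rw [pconj_mul, pconj_C]
  calc P * C qi * pconj P
      = C (r⁻¹ * r) * (P * C qi * pconj P) * C (star r * (star r)⁻¹) := by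
        rw [inv_mul_cancel₀ hr, mul_inv_cancel₀ (star_ne_zero.mpr hr), C_1, one_mul, mul_one]
    _ = _ := by simp only [C_mul]; noncomm_ring

lemma not_toQ_dvd_sandwich_qi {A : Polynomial ℍ} (hred : ReducedWrtI A) {q : ℝ[X]}
    (hq : q.Monic) (hq0 : 0 < q.natDegree) (hq2 : q.natDegree ≤ 2) :
    ¬ toQ q ∣ A * C qi * pconj A := by
  intro hdvd
  set S := A /ₘ toQ q
  set R := A %ₘ toQ q
  have hA : A = toQ q * S + R := by rw [add_comm, modByMonic_add_div]
  have hR0 : R ≠ 0 := by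
    intro h
    rw [h, add_zero] at hA
    exact hq0.ne' (hred.1 q S hA)
  have hRq : R.natDegree < q.natDegree := by
    have hq1 : toQ q ≠ 1 := fun h => hq0.ne' (by rw [← natDegree_toQ, h, natDegree_one])
    simpa [natDegree_toQ] using natDegree_modByMonic_lt A hq.toQ hq1
  have hRdvd := toQ_dvd_sandwich_of_eq_add hA hdvd
  obtain ⟨hR1, hq2⟩ := natDegree_eq_one_of_toQ_dvd_sandwich_qi hq hq2 hR0 hRq hRdvd
  obtain ⟨r, p, hr, hRP⟩ := exists_eq_C_mul_X_add_C_of_natDegree_eq_one hR1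
  rw [hRP] at hA hRdvd
  have hsand := sandwich_qi_eq_toQ_mul_C_qi hq hq2 p (toQ_dvd_sandwich_qi_of_C_mul hr hRdvd)
  obtain ⟨hJ, hK⟩ := imJ_imK_eq_zero_of_sandwich_qi_eq hsand
  have hfac : A = (S * pconj (X + C p) + C r) * (X + C p) := by
    rw [add_mul, mul_assoc, pconj_mul_self_eq_toQ_of_sandwich_qi_eq hsand, ← toQ_mul_comm]
    exact hA
  have hP0 := hred.2 _ _ hfac fun k => by
    rcases k with _ | _ | k <;> simp [coeff_X, coeff_C, hJ, hK]
  rw [natDegree_X_add_C] at hP0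
  exact one_ne_zero hP0

lemma eval_toC (F : ℝ[X]) (z : ℂ) : (toC F).eval z = aeval z F := by
  rw [aeval_def, ← eval_map]; rfl

theorem eval_toC_ne_zero_of_reducedWrtI {A : Polynomial ℍ} (hred : ReducedWrtI A)
    {F₁ F₂ F₃ : ℝ[X]}
    (hF : A * C qi * pconj A = toQ F₁ * C qi + toQ F₂ * C qj + toQ F₃ * C qk) (z : ℂ) :
    (toC F₁).eval z ≠ 0 ∨ (toC F₂).eval z ≠ 0 ∨ (toC F₃).eval z ≠ 0 := by
  by_contra! h
  obtain ⟨h₁, h₂, h₃⟩ := h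
  have hz : IsIntegral ℝ z := .of_finite ℝ z
  have hdvd : ∀ F : ℝ[X], (toC F).eval z = 0 → toQ (minpoly ℝ z) ∣ toQ F := fun F hF =>
    map_dvd toQ (minpoly.dvd ℝ z (by rwa [← eval_toC]))
  refine not_toQ_dvd_sandwich_qi hred (minpoly.monic hz) (minpoly.natDegree_pos hz)
    (Complex.finrank_real_complex ▸ minpoly.natDegree_le z) ?_
  rw [hF]
  exact dvd_add (dvd_add ((hdvd _ h₁).mul_right _) ((hdvd _ h₂).mul_right _))
    ((hdvd _ h₃).mul_right _)

section CommRing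

variable {R : Type*} [CommRing R]

def eulerOp (z : R) (n : ℕ) : R[X] →ₗ[R] R[X] :=
  LinearMap.mulLeft R (X - C z) ∘ₗ derivative - (n : R) • LinearMap.id

lemma eulerOp_apply (z : R) (n : ℕ) (g : R[X]) :
    eulerOp z n g = (X - C z) * derivative g - C (n : R) * g := by
  simp [eulerOp, smul_eq_C_mul]

lemma eulerOp_C_mul_pow (z c : R) (n s : ℕ) :
    eulerOp z n (C c * (X - C z) ^ s) = C (c * (s - n)) * (X - C z) ^ s := by
  rw [eulerOp_apply, derivative_C_mul, derivative_X_sub_C_pow]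
  rcases s with _ | s
  · simp only [Nat.cast_zero, C_0, zero_mul, mul_zero, pow_zero, mul_one, zero_sub, C_mul, C_neg]
    ring
  · simp only [C_mul, C_sub, Nat.add_sub_cancel]; push_cast; ring

lemma pow_succ_dvd_eulerOp {z : R} {n : ℕ} {g : R[X]} (h : (X - C z) ^ n ∣ g) :
    (X - C z) ^ (n + 1) ∣ eulerOp z n g := by
  obtain ⟨u, rfl⟩ := h
  refine ⟨derivative u, ?_⟩
  rw [eulerOp_apply, derivative_mul, derivative_X_sub_C_pow]
  rcases n with _ | n
  · simp
  · simp only [Nat.add_sub_cancel]; push_cast; ring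

lemma wronskian_pow_succ_mul_mul (z : R) (k : ℕ) (β g : R[X]) :
    wronskian ((X - C z) ^ (k + 1) * β) (β * g)
      = β ^ 2 * (X - C z) ^ k * eulerOp z (k + 1) g := by
  rw [wronskian, eulerOp_apply, derivative_mul, derivative_mul, derivative_X_sub_C_pow,
    Nat.add_sub_cancel]
  push_cast; ring

end CommRing

section Field

variable {K : Type*} [Field K]

lemma exists_eulerOp_eq [CharZero K] {z : K} {n : ℕ} {r : K[X]}
    (hr : (taylor z r).coeff n = 0) : ∃ g, eulerOp z n g = r := by
  refine ⟨(taylor z r).sum fun s c => C (c / (s - n)) * (X - C z) ^ s, ?_⟩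
  conv_rhs => rw [← sum_taylor_eq r z]
  simp only [Polynomial.sum_def, map_sum]
  refine Finset.sum_congr rfl fun s _ => ?_
  rw [eulerOp_C_mul_pow]
  -- at `s = n` the witness divides by zero, harmlessly: that coefficient vanishes by `hr`
  rcases eq_or_ne s n with rfl | hs
  · simp [hr]
  · rw [div_mul_cancel₀ _ (sub_ne_zero.mpr (Nat.cast_injective.ne hs))]

theorem exists_ne_zero_natDegree_le_card_forall_eq_zero {ι : Type*} [Fintype ι]
    (ℓ : ι → K[X] →ₗ[K] K) :
    ∃ h : K[X], h ≠ 0 ∧ h.natDegree ≤ Fintype.card ι ∧ ∀ i, ℓ i h = 0 := by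
  set d := Fintype.card ι
  let e := degreeLTEquiv K (d + 1)
  have : FiniteDimensional K (degreeLT K (d + 1)) := e.symm.finiteDimensional
  let L : degreeLT K (d + 1) →ₗ[K] ι → K :=
    LinearMap.pi fun i => ℓ i ∘ₗ (degreeLT K (d + 1)).subtype
  have hker : LinearMap.ker L ≠ ⊥ :=
    LinearMap.ker_ne_bot_of_finrank_lt (by simp [e.finrank_eq, d])
  obtain ⟨⟨h, hmem⟩, hL, hne⟩ := Submodule.exists_mem_ne_zero_of_ne_bot hker
  have h0 : h ≠ 0 := fun h0 => hne (by simp [h0])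
  refine ⟨h, h0, ?_, fun i => congrFun hL i⟩
  rw [mem_degreeLT] at hmem
  exact Nat.lt_succ_iff.mp ((natDegree_lt_iff_degree_lt h0).mpr (by exact_mod_cast hmem))

lemma not_pow_dvd_mul_of_eulerOp_eq {z : K} {n : ℕ} {β g h f : K[X]} (hβ : ¬ (X - C z) ∣ β)
    (hf : f.eval z ≠ 0) (h0 : h ≠ 0) (hdeg : h.natDegree ≤ n) (hg : eulerOp z n g = h * f) :
    ¬ (X - C z) ^ n ∣ β * g := by
  intro hdvd
  have hirr := irreducible_X_sub_C z
  have hg' : (X - C z) ^ n ∣ g :=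
    ((hirr.coprime_iff_not_dvd.mpr hβ).pow_left).dvd_of_dvd_mul_left hdvd
  have hhf := pow_succ_dvd_eulerOp hg'
  rw [hg] at hhf
  have hf' : ¬ (X - C z) ∣ f := by rwa [dvd_iff_isRoot]
  have hh := ((hirr.coprime_iff_not_dvd.mpr hf').pow_left).dvd_of_dvd_mul_right hhf
  have := natDegree_le_of_dvd hh h0
  rw [natDegree_pow, natDegree_X_sub_C] at this
  omega

theorem exists_wronskian_eq_mul_of_card_le_rootMultiplicity [CharZero K] {ι : Type*} [Fintype ι]
    (a : K[X]) (z : K) (f : ι → K[X]) (hcard : Fintype.card ι ≤ a.rootMultiplicity z)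
    (hf : ∃ m, (f m).eval z ≠ 0) :
    ∃ (μ : K[X]) (b : ι → K[X]), ¬ (∀ m, (X - C z) ^ a.rootMultiplicity z ∣ b m) ∧
      ∀ m, wronskian a (b m) = μ * f m := by
  obtain ⟨m₀, hm₀⟩ := hf
  obtain ⟨k, hk⟩ : ∃ k, a.rootMultiplicity z = k + 1 :=
    Nat.exists_eq_succ_of_ne_zero (by have := Fintype.card_pos_iff.mpr ⟨m₀⟩; omega)
  have ha : a ≠ 0 := by rintro rfl; simp at hk
  obtain ⟨β, hβ, hβz⟩ := exists_eq_pow_rootMultiplicity_mul_and_not_dvd a ha z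
  obtain ⟨h, hh0, hhdeg, hres⟩ := exists_ne_zero_natDegree_le_card_forall_eq_zero
    fun m => lcoeff K (a.rootMultiplicity z) ∘ₗ taylor z ∘ₗ LinearMap.mulRight K (f m)
  choose g hg using fun m => exists_eulerOp_eq (hres m)
  refine ⟨β ^ 2 * (X - C z) ^ k * h, fun m => β * g m, fun hall => ?_, fun m => ?_⟩
  · exact not_pow_dvd_mul_of_eulerOp_eq hβz hm₀ hh0 (hhdeg.trans hcard) (hg m₀) (hall m₀)
  · rw [hβ, hk, wronskian_pow_succ_mul_mul, ← hk, hg, LinearMap.mulRight_apply]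
    ring

end Field

theorem rational_solution_exists_of_multiplicity_ge_three_general (α : Polynomial ℝ)
    (A : Polynomial (Quaternion ℝ)) (hred : ReducedWrtI A)
    (F₁ F₂ F₃ : Polynomial ℝ)
    (hF : A * Polynomial.C qi * pconj A
      = toQ F₁ * Polynomial.C qi + toQ F₂ * Polynomial.C qj + toQ F₃ * Polynomial.C qk)
    (z : ℂ) (n : ℕ) (hn : 3 ≤ n) (hz : rootMultiplicity z (toC α) = n) :
    ∃ μ b₁ b₂ b₃ : Polynomial ℂ,
      ¬(((X - Polynomial.C z) ^ n ∣ b₁) ∧ ((X - Polynomial.C z) ^ n ∣ b₂) ∧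
        ((X - Polynomial.C z) ^ n ∣ b₃)) ∧
      toC α * derivative b₁ - derivative (toC α) * b₁ = μ * toC F₁ ∧
      toC α * derivative b₂ - derivative (toC α) * b₂ = μ * toC F₂ ∧
      toC α * derivative b₃ - derivative (toC α) * b₃ = μ * toC F₃ := by
  obtain ⟨μ, b, hb_not_dvd, hb⟩ := exists_wronskian_eq_mul_of_card_le_rootMultiplicity
    (toC α) z ![toC F₁, toC F₂, toC F₃] (by simpa [hz] using hn)
    (by simpa [Fin.exists_fin_succ] using eval_toC_ne_zero_of_reducedWrtI hred hF z)
  rw [hz] at hb_not_dvd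
  refine ⟨μ, b 0, b 1, b 2, fun ⟨h₀, h₁, h₂⟩ => hb_not_dvd fun m => ?_, hb 0, hb 1, hb 2⟩
  fin_cases m <;> assumption

/-- Let `z ∈ ℂ` be a root of `α` of multiplicity `n ≥ 3` and write
`A i Ā = F₁·i + F₂·j + F₃·k`.  Then there always exist `μ, b₁, b₂, b₃ ∈ ℂ[t]`, not all `b_m`
divisible by `(X − z)ⁿ`, with `α·b_m′ − α′·b_m = μ·F_m` for `m = 1, 2, 3`. -/
theorem rational_solution_exists_of_multiplicity_ge_three (α : Polynomial ℝ) (hα : α ≠ 0)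
    (A : Polynomial (Quaternion ℝ)) (hA : A ≠ 0) (hred : ReducedWrtI A)
    (F₁ F₂ F₃ : Polynomial ℝ)
    (hF : A * Polynomial.C qi * pconj A
      = toQ F₁ * Polynomial.C qi + toQ F₂ * Polynomial.C qj + toQ F₃ * Polynomial.C qk)
    (z : ℂ) (n : ℕ) (hn : 3 ≤ n) (hz : rootMultiplicity z (toC α) = n) :
    ∃ μ b₁ b₂ b₃ : Polynomial ℂ,
      ¬(((X - Polynomial.C z) ^ n ∣ b₁) ∧ ((X - Polynomial.C z) ^ n ∣ b₂) ∧
        ((X - Polynomial.C z) ^ n ∣ b₃)) ∧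
      toC α * derivative b₁ - derivative (toC α) * b₁ = μ * toC F₁ ∧
      toC α * derivative b₂ - derivative (toC α) * b₂ = μ * toC F₂ ∧
      toC α * derivative b₃ - derivative (toC α) * b₃ = μ * toC F₃ :=
  rational_solution_exists_of_multiplicity_ge_three_general α A hred F₁ F₂ F₃ hF z n hn hz
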